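/- Let X and Y be real normed vector spaces with X infinite-dimensional, let T : X → Y be a bounded linear operator, and let E be a dense linear subspace of X. Then Δ(T|_E) ≥ Δ(T). -/

import Mathlib

/-- The operator norm of the restriction of `T` to a subspace `M`. -/
noncomputable def restrictedNorm {X Y : Type*} [NormedAddCommGroup X] [NormedSpace ℝ X]
    [NormedAddCommGroup Y] [NormedSpace ℝ Y] (T : X →L[ℝ] Y) (M : Submodule ℝ X) : ℝ :=
  ‖T.comp M.subtypeL‖

/-- `Γ(T) = inf_{M ∈ I(X)} ‖T|_M‖`, the infimum of the norms of the restrictions of `T`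
to infinite-dimensional subspaces of the domain. -/
noncomputable def opGamma {X Y : Type*} [NormedAddCommGroup X] [NormedSpace ℝ X]
    [NormedAddCommGroup Y] [NormedSpace ℝ Y] (T : X →L[ℝ] Y) : ℝ :=
  sInf {r : ℝ | ∃ M : Submodule ℝ X, ¬ FiniteDimensional ℝ M ∧ r = restrictedNorm T M}

/-- `Δ(T) = sup_{M ∈ I(X)} Γ(T|_M)`. -/
noncomputable def opDelta {X Y : Type*} [NormedAddCommGroup X] [NormedSpace ℝ X]
    [NormedAddCommGroup Y] [NormedSpace ℝ Y] (T : X →L[ℝ] Y) : ℝ :=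
  sSup {r : ℝ | ∃ M : Submodule ℝ X, ¬ FiniteDimensional ℝ M ∧
    r = opGamma (T.comp M.subtypeL)}

/-!
Fix an infinite-dimensional `M ⊆ X` and `0 < δ < 1`. Choose a biorthogonal system `(xₙ, fₙ)` with
`xₙ ∈ M` and continuous `fₙ`, and use density to pick `eₙ ∈ E` with `‖fₙ‖ ‖eₙ - xₙ‖ ≤ δ / 2ⁿ⁺¹`.
Since the coordinates of `v ∈ span {xₙ}` are the bounded functionals `fₙ v`, the linear map `U`
with `U xₙ = eₙ` satisfies `‖U v - v‖ ≤ δ ‖v‖`. Hence `U` is injective, its range is an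
infinite-dimensional subspace of `E`, and every infinite-dimensional `W ⊆ range U` has preimage
`U⁻¹ W ⊆ M` with `‖T|_{U⁻¹ W}‖ ≤ (1 + δ) ‖T|_W‖ + δ ‖T‖`. So `Γ(T|_M) ≤ (1 + δ) Δ(T|_E) + δ ‖T‖`,
and `δ → 0` gives the claim.
-/

open Filter Function Module Set Submodule Topology

section LinearAlgebra

variable {K V W : Type*} [Field K] [AddCommGroup V] [Module K V] [AddCommGroup W] [Module K W]

theorem Submodule.finiteDimensional_map_iff {f : V →ₗ[K] W} (hf : Injective f)
    (p : Submodule K V) : FiniteDimensional K (p.map f) ↔ FiniteDimensional K p :=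
  ⟨fun _ ↦ (p.equivMapOfInjective f hf).symm.finiteDimensional, fun _ ↦ inferInstance⟩

theorem Submodule.exists_mem_ker_notMem [FiniteDimensional K W] {M F : Submodule K V}
    (hM : ¬ FiniteDimensional K M) [FiniteDimensional K F] (L : V →ₗ[K] W) :
    ∃ x ∈ M, L x = 0 ∧ x ∉ F := by
  by_contra! h
  have : FiniteDimensional K ↥(M ⊓ LinearMap.ker L) :=
    finiteDimensional_of_le (S₂ := F) fun x hx ↦ h x hx.1 hx.2
  exact hM (Module.Finite.iff_fg.2 (fg_of_fg_map_of_fg_inf_ker L (IsNoetherian.noetherian _)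
    (Module.Finite.iff_fg.1 this)))

end LinearAlgebra

section Biorthogonal

variable {X : Type*} [NormedAddCommGroup X] [NormedSpace ℝ X]

theorem exists_dual_eq_one_of_notMem {F : Submodule ℝ X} [IsClosed (F : Set X)] {x : X}
    (hx : x ∉ F) : ∃ f : StrongDual ℝ X, f x = 1 ∧ ∀ y ∈ F, f y = 0 := by
  obtain ⟨g, hg⟩ := SeparatingDual.exists_eq_one (R := ℝ) (x := F.mkQ x)
    (by rwa [Ne, mkQ_apply, Quotient.mk_eq_zero])
  exact ⟨g.comp F.mkQL, hg, fun y hy ↦ by simp [(Quotient.mk_eq_zero F).2 hy]⟩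

theorem exists_biorthogonal_seq {M : Submodule ℝ X} (hM : ¬ FiniteDimensional ℝ M) :
    ∃ (x : ℕ → X) (f : ℕ → StrongDual ℝ X), (∀ n, x n ∈ M) ∧ (∀ n, f n (x n) = 1) ∧
      Pairwise fun n m ↦ f n (x m) = 0 := by
  obtain ⟨p, hp, hpp⟩ := exists_seq_of_forall_finset_exists
    (fun p : X × StrongDual ℝ X ↦ p.1 ∈ M ∧ p.2 p.1 = 1)
    (fun p q ↦ p.2 q.1 = 0 ∧ q.2 p.1 = 0) fun s _ ↦ by
      let L : X →ₗ[ℝ] (s → ℝ) := LinearMap.pi fun q ↦ (q.1.2 : X →ₗ[ℝ] ℝ)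
      let F := span ℝ (Prod.fst '' (s : Set (X × StrongDual ℝ X)))
      have : FiniteDimensional ℝ F := FiniteDimensional.span_of_finite ℝ (s.finite_toSet.image _)
      have : IsClosed (F : Set X) := F.closed_of_finiteDimensional
      obtain ⟨x, hxM, hLx, hxF⟩ := exists_mem_ker_notMem hM (F := F) L
      obtain ⟨f, hfx, hfF⟩ := exists_dual_eq_one_of_notMem hxF
      refine ⟨(x, f), ⟨hxM, hfx⟩, fun q hq ↦ ⟨congr_fun hLx ⟨q, hq⟩, hfF _ ?_⟩⟩
      exact subset_span (Set.mem_image_of_mem _ hq)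
  refine ⟨fun n ↦ (p n).1, fun n ↦ (p n).2, fun n ↦ (hp n).1, fun n ↦ (hp n).2, fun n m hnm ↦ ?_⟩
  rcases hnm.lt_or_gt with h | h
  exacts [(hpp n m h).1, (hpp m n h).2]

end Biorthogonal

section Restriction

variable {X Y : Type*} [NormedAddCommGroup X] [NormedSpace ℝ X]
  [NormedAddCommGroup Y] [NormedSpace ℝ Y]

theorem restrictedNorm_nonneg (T : X →L[ℝ] Y) (M : Submodule ℝ X) : 0 ≤ restrictedNorm T M :=
  norm_nonneg (T.comp M.subtypeL)

theorem norm_apply_le_restrictedNorm (T : X →L[ℝ] Y) {M : Submodule ℝ X} {x : X} (hx : x ∈ M) :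
    ‖T x‖ ≤ restrictedNorm T M * ‖x‖ :=
  (T.comp M.subtypeL).le_opNorm ⟨x, hx⟩

theorem restrictedNorm_le_of_forall {T : X →L[ℝ] Y} {M : Submodule ℝ X} {C : ℝ} (hC : 0 ≤ C)
    (h : ∀ x ∈ M, ‖T x‖ ≤ C * ‖x‖) : restrictedNorm T M ≤ C :=
  (T.comp M.subtypeL).opNorm_le_bound hC fun x ↦ h x x.2

theorem restrictedNorm_le_norm (T : X →L[ℝ] Y) (M : Submodule ℝ X) : restrictedNorm T M ≤ ‖T‖ :=
  restrictedNorm_le_of_forall (norm_nonneg T) fun x _ ↦ T.le_opNorm x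

theorem restrictedNorm_comp_subtypeL (T : X →L[ℝ] Y) (M : Submodule ℝ X) (W : Submodule ℝ M) :
    restrictedNorm (T.comp M.subtypeL) W = restrictedNorm T (W.map M.subtype) := by
  refine le_antisymm (restrictedNorm_le_of_forall (restrictedNorm_nonneg _ _) fun x hx ↦ ?_)
    (restrictedNorm_le_of_forall (restrictedNorm_nonneg _ _) ?_)
  · exact norm_apply_le_restrictedNorm T (mem_map_of_mem hx)
  · rintro _ ⟨x, hx, rfl⟩
    exact norm_apply_le_restrictedNorm (T.comp M.subtypeL) hx

theorem opGamma_le_restrictedNorm (T : X →L[ℝ] Y) {M : Submodule ℝ X}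
    (hM : ¬ FiniteDimensional ℝ M) : opGamma T ≤ restrictedNorm T M :=
  csInf_le ⟨0, by rintro _ ⟨N, -, rfl⟩; exact restrictedNorm_nonneg T N⟩ ⟨M, hM, rfl⟩

theorem le_opGamma {T : X →L[ℝ] Y} (hX : ¬ FiniteDimensional ℝ X) {a : ℝ}
    (h : ∀ M : Submodule ℝ X, ¬ FiniteDimensional ℝ M → a ≤ restrictedNorm T M) :
    a ≤ opGamma T := by
  refine le_csInf ⟨_, ⊤, fun _ ↦ hX topEquiv.finiteDimensional, rfl⟩ ?_
  rintro _ ⟨M, hM, rfl⟩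
  exact h M hM

theorem opGamma_nonneg (T : X →L[ℝ] Y) : 0 ≤ opGamma T :=
  Real.sInf_nonneg (by rintro _ ⟨M, -, rfl⟩; exact restrictedNorm_nonneg T M)

theorem opGamma_comp_subtypeL_le (T : X →L[ℝ] Y) {M W : Submodule ℝ X} (hWM : W ≤ M)
    (hW : ¬ FiniteDimensional ℝ W) : opGamma (T.comp M.subtypeL) ≤ restrictedNorm T W := by
  have hmap : (W.comap M.subtype).map M.subtype = W := by
    rw [map_comap_subtype, inf_eq_right.2 hWM]
  refine (opGamma_le_restrictedNorm _ (M := W.comap M.subtype) ?_).trans_eq ?_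
  · rwa [← finiteDimensional_map_iff M.injective_subtype, hmap]
  · rw [restrictedNorm_comp_subtypeL, hmap]

theorem le_opGamma_comp_subtypeL {T : X →L[ℝ] Y} {M : Submodule ℝ X}
    (hM : ¬ FiniteDimensional ℝ M) {a : ℝ}
    (h : ∀ W ≤ M, ¬ FiniteDimensional ℝ W → a ≤ restrictedNorm T W) :
    a ≤ opGamma (T.comp M.subtypeL) := by
  refine le_opGamma hM fun W hW ↦ ?_
  rw [restrictedNorm_comp_subtypeL]
  exact h _ (map_subtype_le M W) (by rwa [finiteDimensional_map_iff M.injective_subtype])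

theorem opGamma_comp_subtypeL_le_opDelta (T : X →L[ℝ] Y) {M : Submodule ℝ X}
    (hM : ¬ FiniteDimensional ℝ M) : opGamma (T.comp M.subtypeL) ≤ opDelta T := by
  refine le_csSup ⟨‖T‖, ?_⟩ ⟨M, hM, rfl⟩
  rintro _ ⟨N, hN, rfl⟩
  exact (opGamma_comp_subtypeL_le T le_rfl hN).trans (restrictedNorm_le_norm T N)

theorem opDelta_nonneg (T : X →L[ℝ] Y) : 0 ≤ opDelta T :=
  Real.sSup_nonneg (by rintro _ ⟨M, -, rfl⟩; exact opGamma_nonneg _)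

theorem opDelta_le {T : X →L[ℝ] Y} {a : ℝ}
    (h : ∀ M : Submodule ℝ X, ¬ FiniteDimensional ℝ M → opGamma (T.comp M.subtypeL) ≤ a)
    (ha : 0 ≤ a) : opDelta T ≤ a :=
  Real.sSup_le (by rintro _ ⟨M, hM, rfl⟩; exact h M hM) ha

end Restriction

section Perturbation

variable {X Y : Type*} [NormedAddCommGroup X] [NormedSpace ℝ X]
  [NormedAddCommGroup Y] [NormedSpace ℝ Y]

theorem injective_of_norm_sub_le {V : Submodule ℝ X} {U : V →ₗ[ℝ] X} {δ : ℝ} (hδ : δ < 1)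
    (hU : ∀ v : V, ‖U v - v‖ ≤ δ * ‖(v : X)‖) : Injective U := by
  rw [← LinearMap.ker_eq_bot, eq_bot_iff]
  intro v hv
  have h := hU v
  rw [LinearMap.mem_ker.1 hv, zero_sub, norm_neg] at h
  have : ‖(v : X)‖ = 0 := le_antisymm (by nlinarith [norm_nonneg (v : X)]) (norm_nonneg _)
  simpa using this

theorem restrictedNorm_map_subtype_le (T : X →L[ℝ] Y) {V : Submodule ℝ X} {U : V →ₗ[ℝ] X}
    {δ : ℝ} (hδ : 0 ≤ δ) (hU : ∀ v : V, ‖U v - v‖ ≤ δ * ‖(v : X)‖) (W : Submodule ℝ V) :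
    restrictedNorm T (W.map V.subtype) ≤ (1 + δ) * restrictedNorm T (W.map U) + δ * ‖T‖ := by
  set R := restrictedNorm T (W.map U)
  have hR : 0 ≤ R := restrictedNorm_nonneg T _
  refine restrictedNorm_le_of_forall (by positivity) ?_
  rintro _ ⟨v, hv, rfl⟩
  have hUv : ‖U v‖ ≤ (1 + δ) * ‖(v : X)‖ := by
    linarith [norm_le_norm_add_norm_sub' (U v) (v : X), hU v]
  calc ‖T v‖ = ‖T (U v) - T (U v - v)‖ := by rw [← map_sub, sub_sub_cancel]
    _ ≤ ‖T (U v)‖ + ‖T (U v - v)‖ := norm_sub_le _ _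
    _ ≤ R * ‖U v‖ + ‖T‖ * (δ * ‖(v : X)‖) :=
        add_le_add (norm_apply_le_restrictedNorm T (mem_map_of_mem hv))
          ((T.le_opNorm _).trans (by gcongr; exact hU v))
    _ ≤ R * ((1 + δ) * ‖(v : X)‖) + ‖T‖ * (δ * ‖(v : X)‖) := by gcongr
    _ = ((1 + δ) * R + δ * ‖T‖) * ‖V.subtype v‖ := by simp only [subtype_apply]; ring

theorem opGamma_comp_subtypeL_le_of_perturbation (T : X →L[ℝ] Y) {M V : Submodule ℝ X}
    (hVM : V ≤ M) {U : V →ₗ[ℝ] X} {δ : ℝ} (hδ : 0 ≤ δ)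
    (hU : ∀ v : V, ‖U v - v‖ ≤ δ * ‖(v : X)‖) {W : Submodule ℝ X}
    (hWU : W ≤ LinearMap.range U) (hW : ¬ FiniteDimensional ℝ W) :
    opGamma (T.comp M.subtypeL) ≤ (1 + δ) * restrictedNorm T W + δ * ‖T‖ := by
  have hW' : (W.comap U).map U = W := map_comap_eq_of_le hWU
  have hfin : ¬ FiniteDimensional ℝ ((W.comap U).map V.subtype) := by
    rw [finiteDimensional_map_iff V.injective_subtype]
    intro h
    exact hW (hW' ▸ inferInstance)
  calc opGamma (T.comp M.subtypeL) ≤ restrictedNorm T ((W.comap U).map V.subtype) :=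
        opGamma_comp_subtypeL_le T ((map_subtype_le V _).trans hVM) hfin
    _ ≤ _ := by simpa only [hW'] using restrictedNorm_map_subtype_le T hδ hU (W.comap U)

theorem norm_constr_span_sub_le {x : ℕ → X} {f : ℕ → StrongDual ℝ X}
    (hli : LinearIndependent ℝ x) (hx1 : ∀ n, f n (x n) = 1)
    (hx0 : Pairwise fun n m ↦ f n (x m) = 0) {e : ℕ → X} {δ : ℝ} (hδ : 0 ≤ δ)
    (he : ∀ n, ‖f n‖ * ‖e n - x n‖ ≤ δ / 2 / 2 ^ n) (v : span ℝ (range x)) :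
    ‖(Basis.span hli).constr ℝ e v - v‖ ≤ δ * ‖(v : X)‖ := by
  set b := Basis.span hli
  have hcoord : ∀ n, b.repr v n = f n v := by
    intro n
    have : b.coord n = (f n : X →ₗ[ℝ] ℝ) ∘ₗ (span ℝ (range x)).subtype := b.ext fun m ↦ by
      rcases eq_or_ne m n with rfl | h
      · simp [b, hx1]
      · simp [b, hx0 h.symm, h]
    exact LinearMap.congr_fun this v
  have hsub : b.constr ℝ e v - v = (b.repr v).sum fun n a ↦ a • (e n - x n) := by
    have : b.constr ℝ e - (span ℝ (range x)).subtype = b.constr ℝ (e - x) :=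
      b.ext fun n ↦ by
        rw [LinearMap.sub_apply, b.constr_basis, b.constr_basis, subtype_apply, Basis.span_apply]
        rfl
    change (b.constr ℝ e - (span ℝ (range x)).subtype) v = _
    rw [this, b.constr_apply]
    rfl
  have hgeom : ∑ n ∈ (b.repr v).support, δ / 2 / 2 ^ n ≤ δ :=
    ((summable_geometric_two' δ).sum_le_tsum _ fun _ _ ↦ by positivity).trans_eq
      (tsum_geometric_two' δ)
  rw [hsub]
  calc _ ≤ ∑ n ∈ (b.repr v).support, ‖b.repr v n • (e n - x n)‖ := norm_sum_le _ _
    _ ≤ ∑ n ∈ (b.repr v).support, δ / 2 / 2 ^ n * ‖(v : X)‖ := by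
        refine Finset.sum_le_sum fun n _ ↦ ?_
        rw [norm_smul, hcoord]
        calc ‖f n v‖ * ‖e n - x n‖ ≤ ‖f n‖ * ‖(v : X)‖ * ‖e n - x n‖ := by
              gcongr; exact (f n).le_opNorm v
          _ = ‖f n‖ * ‖e n - x n‖ * ‖(v : X)‖ := by ring
          _ ≤ _ := by gcongr; exact he n
    _ ≤ δ * ‖(v : X)‖ := by rw [← Finset.sum_mul]; gcongr

end Perturbation

section Dense

variable {X Y : Type*} [NormedAddCommGroup X] [NormedSpace ℝ X]
  [NormedAddCommGroup Y] [NormedSpace ℝ Y]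

theorem exists_perturbation_into_dense {E M : Submodule ℝ X} (hE : Dense (E : Set X))
    (hM : ¬ FiniteDimensional ℝ M) {δ : ℝ} (hδ : 0 < δ) :
    ∃ (V : Submodule ℝ X) (U : V →ₗ[ℝ] X), V ≤ M ∧ ¬ FiniteDimensional ℝ V ∧
      LinearMap.range U ≤ E ∧ ∀ v : V, ‖U v - v‖ ≤ δ * ‖(v : X)‖ := by
  obtain ⟨x, f, hxM, hx1, hx0⟩ := exists_biorthogonal_seq hM
  have hli : LinearIndependent ℝ x :=
    .of_pairwise_dual_eq_zero_one x (fun n ↦ (f n : X →ₗ[ℝ] ℝ)) hx0 hx1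
  have happrox : ∀ n, ∃ e ∈ E, ‖f n‖ * ‖e - x n‖ ≤ δ / 2 / 2 ^ n := fun n ↦ by
    obtain ⟨e, heE, he⟩ := hE.exists_dist_lt (x n) (ε := δ / 2 / 2 ^ n / (‖f n‖ + 1))
      (by positivity)
    refine ⟨e, heE, ?_⟩
    rw [dist_comm, dist_eq_norm, lt_div_iff₀ (by positivity)] at he
    nlinarith [norm_nonneg (e - x n)]
  choose e heE he using happrox
  set b := Basis.span hli
  refine ⟨span ℝ (range x), b.constr ℝ e, span_le.2 (range_subset_iff.2 hxM), fun h ↦ ?_, ?_,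
    norm_constr_span_sub_le hli hx1 hx0 hδ.le he⟩
  · have := Module.Finite.finite_basis b
    exact not_finite ℕ
  · rw [b.constr_range]
    exact span_le.2 (range_subset_iff.2 heE)

theorem opGamma_comp_subtypeL_le_opDelta_of_dense (T : X →L[ℝ] Y) {E M : Submodule ℝ X}
    (hE : Dense (E : Set X)) (hM : ¬ FiniteDimensional ℝ M) {δ : ℝ} (hδ0 : 0 < δ)
    (hδ1 : δ < 1) :
    opGamma (T.comp M.subtypeL) ≤ (1 + δ) * opDelta (T.comp E.subtypeL) + δ * ‖T‖ := by
  obtain ⟨V, U, hVM, hV, hUE, hU⟩ := exists_perturbation_into_dense hE hM hδ0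
  set N := (LinearMap.range U).comap E.subtype
  have hN : ¬ FiniteDimensional ℝ N := by
    rw [← finiteDimensional_map_iff E.injective_subtype, map_comap_subtype, inf_eq_right.2 hUE]
    intro h
    exact hV (LinearEquiv.ofInjective U (injective_of_norm_sub_le hδ1 hU)).symm.finiteDimensional
  have hΓ : opGamma (T.comp M.subtypeL) ≤
      (1 + δ) * opGamma ((T.comp E.subtypeL).comp N.subtypeL) + δ * ‖T‖ := by
    rw [← sub_le_iff_le_add, ← div_le_iff₀' (by positivity)]
    refine le_opGamma_comp_subtypeL hN fun W hWN hW ↦ ?_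
    rw [div_le_iff₀' (by positivity), sub_le_iff_le_add, restrictedNorm_comp_subtypeL]
    exact opGamma_comp_subtypeL_le_of_perturbation T hVM hδ0.le hU (map_le_iff_le_comap.2 hWN)
      (by rwa [finiteDimensional_map_iff E.injective_subtype])
  exact hΓ.trans (by gcongr; exact opGamma_comp_subtypeL_le_opDelta _ hN)

end Dense

theorem delta_restrict_ge_general {X Y : Type*} [NormedAddCommGroup X] [NormedSpace ℝ X]
    [NormedAddCommGroup Y] [NormedSpace ℝ Y]
    (T : X →L[ℝ] Y) (E : Submodule ℝ X) (hE : Dense (E : Set X)) :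
    opDelta (T.comp E.subtypeL) ≥ opDelta T := by
  set D := opDelta (T.comp E.subtypeL)
  refine opDelta_le (fun M hM ↦ ?_) (opDelta_nonneg _)
  have hlim : Tendsto (fun δ ↦ (1 + δ) * D + δ * ‖T‖) (𝓝[>] 0) (𝓝 D) :=
    ((show Continuous fun δ : ℝ ↦ (1 + δ) * D + δ * ‖T‖ by fun_prop).tendsto' 0 D
      (by simp)).mono_left nhdsWithin_le_nhds
  exact ge_of_tendsto hlim (eventually_of_mem (Ioo_mem_nhdsGT one_pos) fun δ hδ ↦
    opGamma_comp_subtypeL_le_opDelta_of_dense T hE hM hδ.1 hδ.2)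

/-- `Δ(T|_E) ≥ Δ(T)` for any dense subspace `E`. -/
theorem delta_restrict_ge {X Y : Type*} [NormedAddCommGroup X] [NormedSpace ℝ X]
    [NormedAddCommGroup Y] [NormedSpace ℝ Y] (hX : ¬ FiniteDimensional ℝ X)
    (T : X →L[ℝ] Y) (E : Submodule ℝ X) (hE : Dense (E : Set X)) :
    opDelta (T.comp E.subtypeL) ≥ opDelta T :=
  delta_restrict_ge_general T E hE
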